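/- arXiv:2308.04690 — 3 statements merged into one kernel-verified Lean document; each statement's English description precedes it below -/
import Mathlib

section
/- Let (Ω, μ) be a measure space, let A be a real symmetric invertible N×N matrix with ρ_min = min_i |λ_i| and ρ_max = max_i |λ_i| (λ_i the eigenvalues of A), and let F, α*, β, γ : Ω → ℝ^N be measurable functions such that A α*(ω) = F(ω) for μ-a.e. ω, the functions ω ↦ ‖α*(ω) − β(ω)‖² and ω ↦ ‖γ(ω) − α*(ω)‖² are μ-integrable, and ∫_Ω ‖Aβ(ω) − F(ω)‖² dμ(ω) ≤ ∫_Ω ‖Aγ(ω) − F(ω)‖² dμ(ω). Then ∫_Ω ‖α*(ω) − β(ω)‖² dμ(ω) ≤ 4 (ρ_max/ρ_min)² ∫_Ω ‖γ(ω) − α*(ω)‖² dμ(ω). (This is the quasi-optimality estimate underlying the approximation-error bound for the residual-minimizing coefficient map: the squared L²(Ω) distance from any residual-loss minimizer β to the exact coefficient map α* is bounded by 4(ρ_max/ρ_min)² times the squared L²(Ω) distance from α* of any competitor γ.) -/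
/-!
Since `A α* = F` a.e., the residual `A β - F` equals `A (β - α*)` a.e., so the minimality of `β`
compares `‖A (α* - β)‖` with `‖A (γ - α*)‖` in `L²(μ)`. Expanding in an orthonormal eigenbasis of
`A` gives `ρ_min ‖x‖ ≤ ‖A x‖ ≤ ρ_max ‖x‖`, whence the estimate already holds with the constant
`(ρ_max / ρ_min)²`.
-/

open MeasureTheory

noncomputable def euclNorm {N : ℕ} (v : Fin N → ℝ) : ℝ :=
  ‖(EuclideanSpace.equiv (Fin N) ℝ).symm v‖

open Matrix

namespace Matrix.IsHermitian

variable {𝕜 n : Type*} [RCLike 𝕜] [Fintype n] [DecidableEq n] {A : Matrix n n 𝕜}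

theorem eigenvectorBasis_repr_toEuclideanLin (hA : A.IsHermitian) (v : EuclideanSpace 𝕜 n)
    (i : n) :
    hA.eigenvectorBasis.repr (toEuclideanLin A v) i =
      hA.eigenvalues i * hA.eigenvectorBasis.repr v i := by
  simp only [eigenvectorBasis, OrthonormalBasis.repr_reindex, eigenvalues, eigenvalues₀]
  exact LinearMap.IsSymmetric.eigenvectorBasis_apply_self_apply _ _ _ _

theorem norm_toEuclideanLin_sq (hA : A.IsHermitian) (v : EuclideanSpace 𝕜 n) :
    ‖toEuclideanLin A v‖ ^ 2 = ∑ i, hA.eigenvalues i ^ 2 * ‖hA.eigenvectorBasis.repr v i‖ ^ 2 := by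
  rw [← hA.eigenvectorBasis.repr.norm_map, EuclideanSpace.norm_sq_eq]
  simp [eigenvectorBasis_repr_toEuclideanLin, mul_pow]

theorem sq_mul_norm_sq_le_norm_toEuclideanLin_sq (hA : A.IsHermitian) {c : ℝ} (hc : 0 ≤ c)
    (hc_le : ∀ i, c ≤ |hA.eigenvalues i|) (v : EuclideanSpace 𝕜 n) :
    c ^ 2 * ‖v‖ ^ 2 ≤ ‖toEuclideanLin A v‖ ^ 2 := by
  rw [hA.norm_toEuclideanLin_sq, ← hA.eigenvectorBasis.repr.norm_map v, EuclideanSpace.norm_sq_eq,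
    Finset.mul_sum]
  gcongr ∑ i, ?_ with i
  exact mul_le_mul_of_nonneg_right (sq_abs (hA.eigenvalues i) ▸ pow_le_pow_left₀ hc (hc_le i) 2)
    (sq_nonneg _)

theorem norm_toEuclideanLin_sq_le (hA : A.IsHermitian) {C : ℝ}
    (hC : ∀ i, |hA.eigenvalues i| ≤ C) (v : EuclideanSpace 𝕜 n) :
    ‖toEuclideanLin A v‖ ^ 2 ≤ C ^ 2 * ‖v‖ ^ 2 := by
  rw [hA.norm_toEuclideanLin_sq, ← hA.eigenvectorBasis.repr.norm_map v, EuclideanSpace.norm_sq_eq,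
    Finset.mul_sum]
  gcongr ∑ i, ?_ with i
  exact mul_le_mul_of_nonneg_right
    (sq_abs (hA.eigenvalues i) ▸ pow_le_pow_left₀ (abs_nonneg _) (hC i) 2) (sq_nonneg _)

theorem eigenvalues_ne_zero_of_isUnit (hA : A.IsHermitian) (hunit : IsUnit A) (i : n) :
    hA.eigenvalues i ≠ 0 := by
  intro h
  have hdet : A.det = 0 := by
    rw [hA.det_eq_prod_eigenvalues]
    exact Finset.prod_eq_zero (Finset.mem_univ i) (by simp [h])
  exact ((isUnit_iff_isUnit_det A).mp hunit).ne_zero hdet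

end Matrix.IsHermitian

section QuasiOptimality

variable {Ω E F : Type*} [MeasurableSpace Ω] {μ : Measure Ω}
  [NormedAddCommGroup E] [NormedSpace ℝ E] [NormedAddCommGroup F] [NormedSpace ℝ F]

theorem MeasureTheory.Integrable.norm_sq_comp_continuousLinearMap (L : E →L[ℝ] F) {u : Ω → E}
    (hu : AEStronglyMeasurable u μ) (hint : Integrable (fun ω ↦ ‖u ω‖ ^ 2) μ) :
    Integrable (fun ω ↦ ‖L (u ω)‖ ^ 2) μ := by
  have hL : MemLp (L ∘ u) 2 μ :=
    L.comp_memLp' ((memLp_two_iff_integrable_sq_norm hu).mpr hint)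
  exact (memLp_two_iff_integrable_sq_norm (L.continuous.comp_aestronglyMeasurable hu)).mp hL

theorem integral_norm_sub_sq_le_of_integral_residual_le (L : E →L[ℝ] F) {a b : ℝ} (ha : 0 < a)
    (hlower : ∀ x, a * ‖x‖ ^ 2 ≤ ‖L x‖ ^ 2) (hupper : ∀ x, ‖L x‖ ^ 2 ≤ b * ‖x‖ ^ 2)
    {u v w : Ω → E} {f : Ω → F} (hu : AEStronglyMeasurable u μ) (hv : AEStronglyMeasurable v μ)
    (hw : AEStronglyMeasurable w μ) (hsol : ∀ᵐ ω ∂μ, L (u ω) = f ω)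
    (huv : Integrable (fun ω ↦ ‖u ω - v ω‖ ^ 2) μ) (hwu : Integrable (fun ω ↦ ‖w ω - u ω‖ ^ 2) μ)
    (hmin : ∫ ω, ‖L (v ω) - f ω‖ ^ 2 ∂μ ≤ ∫ ω, ‖L (w ω) - f ω‖ ^ 2 ∂μ) :
    ∫ ω, ‖u ω - v ω‖ ^ 2 ∂μ ≤ b / a * ∫ ω, ‖w ω - u ω‖ ^ 2 ∂μ := by
  have hres_v : (fun ω ↦ ‖L (v ω) - f ω‖ ^ 2) =ᵐ[μ] fun ω ↦ ‖L (u ω - v ω)‖ ^ 2 := by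
    filter_upwards [hsol] with ω hω
    rw [map_sub, hω, norm_sub_rev]
  have hres_w : (fun ω ↦ ‖L (w ω) - f ω‖ ^ 2) =ᵐ[μ] fun ω ↦ ‖L (w ω - u ω)‖ ^ 2 := by
    filter_upwards [hsol] with ω hω
    rw [map_sub, hω]
  have key : a * ∫ ω, ‖u ω - v ω‖ ^ 2 ∂μ ≤ b * ∫ ω, ‖w ω - u ω‖ ^ 2 ∂μ := by
    rw [← integral_const_mul, ← integral_const_mul]
    calc ∫ ω, a * ‖u ω - v ω‖ ^ 2 ∂μ
        ≤ ∫ ω, ‖L (u ω - v ω)‖ ^ 2 ∂μ :=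
          integral_mono (huv.const_mul a) (huv.norm_sq_comp_continuousLinearMap L (hu.sub hv))
            fun ω ↦ hlower _
      _ = ∫ ω, ‖L (v ω) - f ω‖ ^ 2 ∂μ := (integral_congr_ae hres_v).symm
      _ ≤ ∫ ω, ‖L (w ω) - f ω‖ ^ 2 ∂μ := hmin
      _ = ∫ ω, ‖L (w ω - u ω)‖ ^ 2 ∂μ := integral_congr_ae hres_w
      _ ≤ ∫ ω, b * ‖w ω - u ω‖ ^ 2 ∂μ :=
          integral_mono (hwu.norm_sq_comp_continuousLinearMap L (hw.sub hu)) (hwu.const_mul b)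
            fun ω ↦ hupper _
  rwa [div_mul_eq_mul_div, le_div_iff₀' ha]

end QuasiOptimality

theorem quasi_optimality_general
    {N : ℕ} (A : Matrix (Fin N) (Fin N) ℝ)
    (hA : A.IsHermitian) (hinv : IsUnit A)
    (ρmin ρmax : ℝ)
    (hρmin : IsLeast {r : ℝ | ∃ i : Fin N, r = |hA.eigenvalues i|} ρmin)
    (hρmax : IsGreatest {r : ℝ | ∃ i : Fin N, r = |hA.eigenvalues i|} ρmax)
    {Ω : Type*} [MeasurableSpace Ω] (μ : Measure Ω)
    (F αstar β γ : Ω → Fin N → ℝ)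
    (hαmeas : Measurable αstar)
    (hβmeas : Measurable β) (hγmeas : Measurable γ)
    (hsol : ∀ᵐ ω ∂μ, A.mulVec (αstar ω) = F ω)
    (hint₁ : Integrable (fun ω => (euclNorm (αstar ω - β ω)) ^ 2) μ)
    (hint₂ : Integrable (fun ω => (euclNorm (γ ω - αstar ω)) ^ 2) μ)
    (hmin : (∫ ω, (euclNorm (A.mulVec (β ω) - F ω)) ^ 2 ∂μ)
        ≤ ∫ ω, (euclNorm (A.mulVec (γ ω) - F ω)) ^ 2 ∂μ) :
    (∫ ω, (euclNorm (αstar ω - β ω)) ^ 2 ∂μ)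
      ≤ 4 * (ρmax / ρmin) ^ 2 * ∫ ω, (euclNorm (γ ω - αstar ω)) ^ 2 ∂μ := by
  obtain ⟨i₀, hi₀⟩ := hρmin.1
  have hρmin_pos : 0 < ρmin := hi₀ ▸ abs_pos.mpr (hA.eigenvalues_ne_zero_of_isUnit hinv i₀)
  have hmeas {g : Ω → Fin N → ℝ} (hg : Measurable g) :
      AEStronglyMeasurable (fun ω ↦ WithLp.toLp 2 (g ω)) μ :=
    (PiLp.continuous_toLp 2 _).comp_aestronglyMeasurable hg.aestronglyMeasurable
  -- `euclNorm v` is `‖toLp 2 v‖` and `toEuclideanCLM A (toLp 2 x) = toLp 2 (A *ᵥ x)` by `rfl`,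
  -- so the hypotheses on `euclNorm` are the ones the general estimate asks for.
  have hbound := integral_norm_sub_sq_le_of_integral_residual_le (μ := μ)
    (toEuclideanCLM (n := Fin N) (𝕜 := ℝ) A) (pow_pos hρmin_pos 2)
    (hA.sq_mul_norm_sq_le_norm_toEuclideanLin_sq hρmin_pos.le fun i ↦ hρmin.2 ⟨i, rfl⟩)
    (hA.norm_toEuclideanLin_sq_le fun i ↦ hρmax.2 ⟨i, rfl⟩)
    (f := fun ω ↦ WithLp.toLp 2 (F ω)) (hmeas hαmeas) (hmeas hβmeas) (hmeas hγmeas)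
    (hsol.mono fun ω hω ↦ congrArg (WithLp.toLp 2) hω) hint₁ hint₂ hmin
  rw [← div_pow] at hbound
  have hI : 0 ≤ ∫ ω, euclNorm (γ ω - αstar ω) ^ 2 ∂μ := integral_nonneg fun ω ↦ sq_nonneg _
  calc _ ≤ (ρmax / ρmin) ^ 2 * ∫ ω, euclNorm (γ ω - αstar ω) ^ 2 ∂μ := hbound
    _ ≤ 4 * (ρmax / ρmin) ^ 2 * ∫ ω, euclNorm (γ ω - αstar ω) ^ 2 ∂μ := by
      gcongr
      exact le_mul_of_one_le_left (sq_nonneg _) (by norm_num)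

/-- (Quasi-optimality estimate for the residual-minimizing coefficient
map.)  Let `(Ω, μ)` be a measure space, `A` a real symmetric (= Hermitian over `ℝ`)
invertible `N×N` matrix with `ρ_min = min_i |λ_i|`, `ρ_max = max_i |λ_i|`, and let
`F, α*, β, γ : Ω → ℝ^N` be measurable, with `A α*(ω) = F(ω)` μ-a.e., the functions
`ω ↦ ‖α*(ω) − β(ω)‖²` and `ω ↦ ‖γ(ω) − α*(ω)‖²` μ-integrable, and
`∫ ‖Aβ − F‖² dμ ≤ ∫ ‖Aγ − F‖² dμ`.  Then
`∫ ‖α* − β‖² dμ ≤ 4 (ρ_max/ρ_min)² ∫ ‖γ − α*‖² dμ`. -/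
theorem quasi_optimality
    {N : ℕ} (hN : 0 < N) (A : Matrix (Fin N) (Fin N) ℝ)
    (hA : A.IsHermitian) (hinv : IsUnit A)
    (ρmin ρmax : ℝ)
    (hρmin : IsLeast {r : ℝ | ∃ i : Fin N, r = |hA.eigenvalues i|} ρmin)
    (hρmax : IsGreatest {r : ℝ | ∃ i : Fin N, r = |hA.eigenvalues i|} ρmax)
    {Ω : Type*} [MeasurableSpace Ω] (μ : Measure Ω)
    (F αstar β γ : Ω → Fin N → ℝ)
    (hFmeas : Measurable F) (hαmeas : Measurable αstar)
    (hβmeas : Measurable β) (hγmeas : Measurable γ)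
    (hsol : ∀ᵐ ω ∂μ, A.mulVec (αstar ω) = F ω)
    (hint₁ : Integrable (fun ω => (euclNorm (αstar ω - β ω)) ^ 2) μ)
    (hint₂ : Integrable (fun ω => (euclNorm (γ ω - αstar ω)) ^ 2) μ)
    (hmin : (∫ ω, (euclNorm (A.mulVec (β ω) - F ω)) ^ 2 ∂μ)
        ≤ ∫ ω, (euclNorm (A.mulVec (γ ω) - F ω)) ^ 2 ∂μ) :
    (∫ ω, (euclNorm (αstar ω - β ω)) ^ 2 ∂μ)
      ≤ 4 * (ρmax / ρmin) ^ 2 * ∫ ω, (euclNorm (γ ω - αstar ω)) ^ 2 ∂μ :=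
  quasi_optimality_general A hA hinv ρmin ρmax hρmin hρmax μ F αstar β γ hαmeas hβmeas hγmeas hsol
    hint₁ hint₂ hmin
end

section
/- Let f : [0,1] → ℝ be continuously differentiable. Define u⁰(x) = ∫_x^1 f(s) ds and, for ε > 0, the corrector φ_ε(x) = −u⁰(0) · e^{−x/ε}. Then there exists a constant κ > 0, depending only on f and not on ε, such that for every ε ∈ (0, 1] and every function u : [0,1] → ℝ that is twice continuously differentiable on [0,1] and satisfies −ε u''(x) − u'(x) = f(x) for all x ∈ (0,1) together with u(0) = u(1) = 0, one has the L² error bound ∫_0^1 (u(x) − u⁰(x) − φ_ε(x))² dx ≤ κ² ε². -/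
/-!
The error `w = u - u⁰ - φ_ε` solves `-ε w'' - w' = -ε f'` on `(0,1)`, vanishes at `0`, and
equals `u⁰(0) e^{-1/ε} = O(ε)` at `1`. The operator `-ε d² - d` obeys a minimum principle
(an integrating factor `e^{x/ε}` makes `e^{x/ε} z'` strictly decreasing), so comparing `±w`
with the barrier `K ε (2 - x)`, which the operator maps to `K ε > ε |f'|`, gives `|w| ≤ 2 K ε`
uniformly in `x`, hence the `L²` bound.
-/

open Set intervalIntegral

/-- The derivatives are carried as witnesses, so that the equation is stable under sums with no
differentiability bookkeeping. -/
def SolvesOn (ε : ℝ) (s : Set ℝ) (u g : ℝ → ℝ) : Prop :=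
  ∃ u' u'' : ℝ → ℝ, ∀ x ∈ s,
    HasDerivAt u (u' x) x ∧ HasDerivAt u' (u'' x) x ∧ -ε * u'' x - u' x = g x

theorem Real.exp_neg_one_div_le {ε : ℝ} (hε : 0 < ε) : Real.exp (-1 / ε) ≤ ε := by
  rw [neg_div, one_div, Real.exp_neg, inv_le_comm₀ (Real.exp_pos _) hε]
  linarith [Real.add_one_le_exp ε⁻¹]

theorem ContDiffOn.exists_abs_deriv_le {f : ℝ → ℝ} {a b : ℝ} (hf : ContDiffOn ℝ 1 f (Icc a b))
    (hab : a < b) : ∃ M, ∀ x ∈ Ioo a b, |deriv f x| ≤ M := by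
  obtain ⟨M, hM⟩ := isCompact_Icc.exists_bound_of_continuousOn
    (hf.continuousOn_derivWithin (uniqueDiffOn_Icc hab) le_rfl)
  refine ⟨M, fun x hx => ?_⟩
  rw [← derivWithin_of_mem_nhds (Icc_mem_nhds hx.1 hx.2), ← Real.norm_eq_abs]
  exact hM x (Ioo_subset_Icc_self hx)

theorem integral_sq_le_of_abs_le {g : ℝ → ℝ} {a b C : ℝ} (hab : a ≤ b)
    (hg : ∀ x ∈ Icc a b, |g x| ≤ C) : ∫ x in a..b, g x ^ 2 ≤ C ^ 2 * (b - a) :=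
  calc ∫ x in a..b, g x ^ 2
      ≤ ‖∫ x in a..b, g x ^ 2‖ := le_abs_self _
    _ ≤ C ^ 2 * |b - a| := norm_integral_le_of_norm_le_const fun x hx => by
        rw [uIoc_of_le hab] at hx
        rw [norm_pow, Real.norm_eq_abs]
        exact pow_le_pow_left₀ (abs_nonneg _) (hg x (Ioc_subset_Icc_self hx)) 2
    _ = C ^ 2 * (b - a) := by rw [abs_of_nonneg (sub_nonneg.2 hab)]

theorem strictAntiOn_exp_mul_of_neg_mul_deriv_sub_pos {ε a b : ℝ} (hε : 0 < ε)
    {z' z'' : ℝ → ℝ} (hz'' : ∀ x ∈ Ioo a b, HasDerivAt z' (z'' x) x)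
    (hL : ∀ x ∈ Ioo a b, 0 < -ε * z'' x - z' x) :
    StrictAntiOn (fun t => Real.exp (t / ε) * z' t) (Ioo a b) := by
  have hd (x) (hx : x ∈ Ioo a b) : HasDerivAt (fun t => Real.exp (t / ε) * z' t)
      (-(Real.exp (x / ε) / ε) * (-ε * z'' x - z' x)) x :=
    ((((hasDerivAt_id' x).div_const ε).exp).mul (hz'' x hx)).congr_deriv (by field_simp; ring)
  refine strictAntiOn_of_deriv_neg (convex_Ioo a b)
    (fun x hx => (hd x hx).continuousAt.continuousWithinAt) fun x hx => ?_
  rw [interior_Ioo] at hx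
  rw [(hd x hx).deriv]
  exact mul_neg_of_neg_of_pos (neg_neg_of_pos (by positivity)) (hL x hx)

namespace SolvesOn

variable {ε a b : ℝ} {s : Set ℝ} {u v g h : ℝ → ℝ}

theorem add (hu : SolvesOn ε s u g) (hv : SolvesOn ε s v h) :
    SolvesOn ε s (u + v) (g + h) := by
  obtain ⟨u', u'', hu⟩ := hu
  obtain ⟨v', v'', hv⟩ := hv
  refine ⟨u' + v', u'' + v'', fun x hx => ?_⟩
  obtain ⟨hu₁, hu₂, hu₃⟩ := hu x hx
  obtain ⟨hv₁, hv₂, hv₃⟩ := hv x hx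
  exact ⟨hu₁.add hv₁, hu₂.add hv₂, by simp only [Pi.add_apply]; linarith⟩

theorem sub (hu : SolvesOn ε s u g) (hv : SolvesOn ε s v h) :
    SolvesOn ε s (u - v) (g - h) := by
  obtain ⟨u', u'', hu⟩ := hu
  obtain ⟨v', v'', hv⟩ := hv
  refine ⟨u' - v', u'' - v'', fun x hx => ?_⟩
  obtain ⟨hu₁, hu₂, hu₃⟩ := hu x hx
  obtain ⟨hv₁, hv₂, hv₃⟩ := hv x hx
  exact ⟨hu₁.sub hv₁, hu₂.sub hv₂, by simp only [Pi.sub_apply]; linarith⟩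

theorem of_contDiffOn (hu : ContDiffOn ℝ 2 u s) (hs : IsOpen s)
    (heq : ∀ x ∈ s, -ε * deriv (deriv u) x - deriv u x = g x) : SolvesOn ε s u g := by
  have hu' : ContDiffOn ℝ 1 (deriv u) s := hu.deriv_of_isOpen hs (by norm_num)
  refine ⟨deriv u, deriv (deriv u), fun x hx => ⟨?_, ?_, heq x hx⟩⟩
  · exact ((hu.differentiableOn (by norm_num)).differentiableAt (hs.mem_nhds hx)).hasDerivAt
  · exact ((hu'.differentiableOn one_ne_zero).differentiableAt (hs.mem_nhds hx)).hasDerivAt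

theorem integral_right {f : ℝ → ℝ} (hf : ContDiffOn ℝ 1 f (Icc a b)) :
    SolvesOn ε (Ioo a b) (fun x => ∫ t in x..b, f t) (fun x => f x + ε * deriv f x) := by
  refine ⟨fun x => -f x, fun x => -deriv f x, fun x hx => ⟨?_, ?_, by ring⟩⟩
  · have hfc : ContinuousOn f (uIcc x b) :=
      hf.continuousOn.mono (by rw [uIcc_of_le hx.2.le]; exact Icc_subset_Icc_left hx.1.le)
    exact integral_hasDerivAt_left hfc.intervalIntegrable
      ((hf.continuousOn.mono Ioo_subset_Icc_self).stronglyMeasurableAtFilter isOpen_Ioo x hx)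
      (hf.continuousOn.continuousAt (Icc_mem_nhds hx.1 hx.2))
  · exact ((hf.differentiableOn one_ne_zero).differentiableAt
      (Icc_mem_nhds hx.1 hx.2)).hasDerivAt.neg

theorem mul_exp (hε : ε ≠ 0) (c : ℝ) : SolvesOn ε s (fun x => c * Real.exp (-x / ε)) 0 := by
  have hφ (c x : ℝ) :
      HasDerivAt (fun x => c * Real.exp (-x / ε)) (-c / ε * Real.exp (-x / ε)) x :=
    (((hasDerivAt_neg' x).div_const ε).exp.const_mul c).congr_deriv (by ring)
  refine ⟨fun x => -c / ε * Real.exp (-x / ε), fun x => -(-c / ε) / ε * Real.exp (-x / ε),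
    fun x _ => ⟨hφ c x, hφ _ x, ?_⟩⟩
  simp only [Pi.zero_apply]
  field_simp
  ring

theorem mul_sub (δ c : ℝ) : SolvesOn ε s (fun x => δ * (c - x)) (fun _ => δ) :=
  ⟨fun _ => -δ, 0, fun x _ => ⟨(((hasDerivAt_id' x).const_sub c).const_mul δ).congr_deriv
    (by ring), hasDerivAt_const x _, by simp⟩⟩

/-- Minimum principle: at an interior minimum `z' = 0`, and then `e^{t/ε} z'` decreasing forces
`z` to decrease strictly all the way to `b`. -/
theorem nonneg {z : ℝ → ℝ} (hε : 0 < ε) (hz : SolvesOn ε (Ioo a b) z g)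
    (hg : ∀ x ∈ Ioo a b, 0 < g x) (hzc : ContinuousOn z (Icc a b)) (ha : 0 ≤ z a)
    (hb : 0 ≤ z b) : ∀ x ∈ Icc a b, 0 ≤ z x := by
  obtain ⟨z', z'', hz⟩ := hz
  intro x hx
  obtain ⟨x₀, hx₀, hmin⟩ := isCompact_Icc.exists_isMinOn ⟨x, hx⟩ hzc
  refine le_trans ?_ (hmin hx)
  rcases hx₀.1.eq_or_lt with rfl | hax₀
  · exact ha
  rcases hx₀.2.eq_or_lt with rfl | hx₀b
  · exact hb
  exfalso
  have hz'x₀ : z' x₀ = 0 := by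
    rw [← (hz x₀ ⟨hax₀, hx₀b⟩).1.deriv]
    exact (hmin.isLocalMin (Icc_mem_nhds hax₀ hx₀b)).deriv_eq_zero
  have hanti := strictAntiOn_exp_mul_of_neg_mul_deriv_sub_pos hε (fun x hx => (hz x hx).2.1)
    fun x hx => (hz x hx).2.2 ▸ hg x hx
  have hz'neg : ∀ t ∈ Ioo x₀ b, z' t < 0 := fun t ht => by
    have : Real.exp (t / ε) * z' t < Real.exp (x₀ / ε) * z' x₀ :=
      hanti ⟨hax₀, hx₀b⟩ ⟨hax₀.trans ht.1, ht.2⟩ ht.1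
    rw [hz'x₀, mul_zero] at this
    exact neg_of_mul_neg_right this (Real.exp_pos _).le
  have hzanti : StrictAntiOn z (Icc x₀ b) := by
    refine strictAntiOn_of_deriv_neg (convex_Icc x₀ b)
      (hzc.mono (Icc_subset_Icc_left hax₀.le)) fun t ht => ?_
    rw [interior_Icc] at ht
    rw [(hz t ⟨hax₀.trans ht.1, ht.2⟩).1.deriv]
    exact hz'neg t ht
  exact (hzanti (left_mem_Icc.2 hx₀b.le) (right_mem_Icc.2 hx₀b.le) hx₀b).not_ge
    (hmin (right_mem_Icc.2 (hax₀.trans hx₀b).le))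

/-- Compare `±w` with the barrier `δ (b + 1 - x)`, which the operator maps to `δ`. -/
theorem abs_le {w : ℝ → ℝ} (hε : 0 < ε) (hw : SolvesOn ε (Ioo a b) w g)
    (hwc : ContinuousOn w (Icc a b)) {δ : ℝ} (hg : ∀ x ∈ Ioo a b, |g x| < δ) (ha : |w a| ≤ δ)
    (hb : |w b| ≤ δ) : ∀ x ∈ Icc a b, |w x| ≤ δ * (b + 1 - a) := by
  intro x hx
  have hβ : SolvesOn ε (Ioo a b) (fun x => δ * (b + 1 - x)) (fun _ => δ) := mul_sub δ (b + 1)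
  have hβc : ContinuousOn (fun x => δ * (b + 1 - x)) (Icc a b) := by fun_prop
  have hδ : 0 ≤ δ := (abs_nonneg _).trans ha
  have hab : a ≤ b := hx.1.trans hx.2
  have hlow := (hβ.add hw).nonneg hε
    (fun x hx => by simp only [Pi.add_apply]; linarith [neg_abs_le (g x), hg x hx])
    (hβc.add hwc) (by simp only [Pi.add_apply]; nlinarith [neg_abs_le (w a)])
    (by simp only [Pi.add_apply]; linarith [neg_abs_le (w b)]) x hx
  have hupp := (hβ.sub hw).nonneg hε
    (fun x hx => by simp only [Pi.sub_apply]; linarith [le_abs_self (g x), hg x hx])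
    (hβc.sub hwc) (by simp only [Pi.sub_apply]; nlinarith [le_abs_self (w a)])
    (by simp only [Pi.sub_apply]; linarith [le_abs_self (w b)]) x hx
  simp only [Pi.add_apply, Pi.sub_apply] at hlow hupp
  exact _root_.abs_le.2 ⟨by nlinarith [hx.1], by nlinarith [hx.1]⟩

end SolvesOn

/-- Let `f : [0,1] → ℝ` be continuously differentiable, let
`u⁰(x) = ∫_x^1 f(s) ds` and, for `ε > 0`, let `φ_ε(x) = −u⁰(0)·e^{−x/ε}` be the
boundary-layer corrector.  Then there is a constant `κ > 0`, depending only on `f` and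
not on `ε`, such that for every `ε ∈ (0,1]` and every `u : [0,1] → ℝ` twice continuously
differentiable on `[0,1]` solving `−ε u'' − u' = f` on `(0,1)` with `u(0) = u(1) = 0`,
one has `∫_0^1 (u − u⁰ − φ_ε)² dx ≤ κ² ε²`. -/
theorem corrector_L2_convergence_rate
    (f : ℝ → ℝ) (hf : ContDiffOn ℝ 1 f (Icc 0 1))
    (u0 : ℝ → ℝ) (hu0 : ∀ x, u0 x = ∫ s in x..(1 : ℝ), f s) :
    ∃ κ : ℝ, 0 < κ ∧
      ∀ ε ∈ Ioc (0 : ℝ) 1, ∀ u : ℝ → ℝ,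
        ContDiffOn ℝ 2 u (Icc 0 1) →
        (∀ x ∈ Ioo (0 : ℝ) 1, -ε * deriv (deriv u) x - deriv u x = f x) →
        u 0 = 0 → u 1 = 0 →
        (∫ x in (0 : ℝ)..1, (u x - u0 x - (-u0 0 * Real.exp (-x / ε))) ^ 2)
          ≤ κ ^ 2 * ε ^ 2 := by
  obtain ⟨M, hM⟩ := hf.exists_abs_deriv_le zero_lt_one
  set K := |M| + |u0 0| + 1
  refine ⟨2 * K, by positivity, ?_⟩
  rintro ε ⟨hε, -⟩ u hu hueq hu_zero hu_one
  have hu0_eq : u0 = fun x => ∫ s in x..(1 : ℝ), f s := funext hu0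
  set w := fun x => u x - u0 x - (-u0 0 * Real.exp (-x / ε))
  have hw : SolvesOn ε (Ioo 0 1) w (fun x => -(ε * deriv f x)) := by
    convert ((SolvesOn.of_contDiffOn (hu.mono Ioo_subset_Icc_self) isOpen_Ioo hueq).sub
      (hu0_eq ▸ SolvesOn.integral_right hf)).sub (SolvesOn.mul_exp hε.ne' (-u0 0)) using 1
    · rfl
    ext x
    simp only [Pi.sub_apply, Pi.zero_apply]
    ring
  have hu0c : ContinuousOn u0 (Icc 0 1) := by
    have := continuousOn_primitive_interval_left (a := 0) (b := 1) (μ := MeasureTheory.volume)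
      (by rw [uIcc_of_le zero_le_one]; exact hf.continuousOn.integrableOn_Icc)
    rwa [uIcc_of_le zero_le_one, ← hu0_eq] at this
  have hw_one : |w 1| ≤ K * ε := by
    have hu0_one : u0 1 = 0 := by rw [hu0, integral_same]
    simp only [w, hu_one, hu0_one, abs_mul, Real.abs_exp, sub_zero, zero_sub, neg_mul, neg_neg]
    exact mul_le_mul (by linarith [abs_nonneg M]) (Real.exp_neg_one_div_le hε) (by positivity)
      (by positivity)
  have hg : ∀ x ∈ Ioo (0 : ℝ) 1, |-(ε * deriv f x)| < K * ε := fun x hx => by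
    rw [abs_neg, abs_mul, abs_of_pos hε, mul_comm]
    exact mul_lt_mul_of_pos_right (by linarith [hM x hx, le_abs_self M, abs_nonneg (u0 0)]) hε
  have hbound := hw.abs_le hε ((hu.continuousOn.sub hu0c).sub (by fun_prop)) hg
    (by simp [w, hu_zero]; positivity) hw_one
  calc (∫ x in (0 : ℝ)..1, w x ^ 2) ≤ (K * ε * (1 + 1 - 0)) ^ 2 * (1 - 0) :=
        integral_sq_le_of_abs_le zero_le_one hbound
    _ = (2 * K) ^ 2 * ε ^ 2 := by ring
end

section
/- Let f : [0,1] → ℝ be continuously differentiable and define u⁰(x) = ∫_x^1 f(s) ds. Then there exists a constant κ > 0, depending only on f and not on ε, such that for every ε ∈ (0, 1] and every function u : [0,1] → ℝ that is twice continuously differentiable on [0,1] and satisfies −ε u''(x) − u'(x) = f(x) for all x ∈ (0,1) together with u(0) = u(1) = 0, one has the L² convergence estimate ∫_0^1 (u(x) − u⁰(x))² dx ≤ κ² ε; that is, the diffusive solution converges to the limit solution in L²(0,1) at rate ε^{1/2}. -/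
/-!
The error `v = u - u⁰` solves `ε v'' + v' = ε f'` with `v 0 = -∫₀¹ f` and `v 1 = 0`. The
maximum principle for `-ε φ'' - φ'` (proved with the integrating factor `exp (x / ε)`) bounds
`|v|` by the barrier `|v 0| exp (-x/ε) + ε M (1 - x)`, where `M` bounds `|f'|`. The boundary layer
contributes `O(ε)` to the squared `L²` norm and the linear part `O(ε²)`.
-/

open Set intervalIntegral Real

theorem ContDiffOn.exists_pos_bound_abs_deriv {f : ℝ → ℝ} {a b : ℝ}
    (hf : ContDiffOn ℝ 1 f (Icc a b)) (hab : a < b) :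
    ∃ M, 0 < M ∧ ∀ x ∈ Ioo a b, |deriv f x| ≤ M := by
  obtain ⟨C, hC⟩ := isCompact_Icc.exists_bound_of_continuousOn
    (hf.continuousOn_derivWithin (uniqueDiffOn_Icc hab) le_rfl)
  refine ⟨max C 1, by positivity, fun x hx => ?_⟩
  rw [← derivWithin_of_mem_nhds (Icc_mem_nhds hx.1 hx.2), ← Real.norm_eq_abs]
  exact (hC x (Ioo_subset_Icc_self hx)).trans (le_max_left _ _)

theorem ContDiffOn.hasDerivAt_deriv_of_mem_Ioo {u : ℝ → ℝ} {a b x : ℝ}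
    (hu : ContDiffOn ℝ 2 u (Icc a b)) (hx : x ∈ Ioo a b) :
    HasDerivAt (deriv u) (deriv (deriv u) x) x :=
  ((((hu.mono Ioo_subset_Icc_self).deriv_of_isOpen isOpen_Ioo (by norm_num)).differentiableOn
    one_ne_zero).differentiableAt (isOpen_Ioo.mem_nhds hx)).hasDerivAt

theorem ContinuousOn.continuousOn_integral_left {f : ℝ → ℝ} {a b : ℝ}
    (hf : ContinuousOn f (Icc a b)) (hab : a ≤ b) :
    ContinuousOn (fun x => ∫ s in x..b, f s) (Icc a b) := by
  have h := continuousOn_primitive_interval_left (f := f) (a := a) (b := b)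
    (μ := MeasureTheory.volume) (by rw [uIcc_of_le hab]; exact hf.integrableOn_Icc)
  rwa [uIcc_of_le hab] at h

theorem ContinuousOn.hasDerivAt_integral_left {f : ℝ → ℝ} {a b x : ℝ}
    (hf : ContinuousOn f (Icc a b)) (hx : x ∈ Ioo a b) :
    HasDerivAt (fun y => ∫ s in y..b, f s) (-f x) x :=
  integral_hasDerivAt_left
    ((hf.mono (Icc_subset_Icc_left hx.1.le)).intervalIntegrable_of_Icc hx.2.le)
    ((hf.mono Ioo_subset_Icc_self).stronglyMeasurableAtFilter isOpen_Ioo x hx)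
    (hf.continuousAt (Icc_mem_nhds hx.1 hx.2))

namespace ConvectionDiffusion

variable {ε a b : ℝ}

theorem antitoneOn_exp_div_mul {φ' φ'' : ℝ → ℝ} (hε : 0 < ε)
    (hφ'' : ∀ x ∈ Ioo a b, HasDerivAt φ' (φ'' x) x)
    (hL : ∀ x ∈ Ioo a b, ε * φ'' x + φ' x ≤ 0) :
    AntitoneOn (fun x => exp (x / ε) * φ' x) (Ioo a b) := by
  have hderiv : ∀ x ∈ Ioo a b, HasDerivAt (fun x => exp (x / ε) * φ' x)
      (exp (x / ε) * (ε * φ'' x + φ' x) / ε) x := fun x hx =>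
    (((hasDerivAt_id' x).div_const ε).exp.mul (hφ'' x hx)).congr_deriv
      (by field_simp; ring)
  refine antitoneOn_of_hasDerivWithinAt_nonpos
    (f' := fun x => exp (x / ε) * (ε * φ'' x + φ' x) / ε) (convex_Ioo a b)
    (fun x hx => (hderiv x hx).continuousAt.continuousWithinAt) ?_ ?_ <;> rw [interior_Ioo]
  · exact fun x hx => (hderiv x hx).hasDerivWithinAt
  · exact fun x hx => div_nonpos_of_nonpos_of_nonneg
      (mul_nonpos_of_nonneg_of_nonpos (exp_pos _).le (hL x hx)) hε.le

theorem nonneg_of_supersolution {φ φ' φ'' : ℝ → ℝ} (hε : 0 < ε)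
    (hφ : ContinuousOn φ (Icc a b))
    (hφ' : ∀ x ∈ Ioo a b, HasDerivAt φ (φ' x) x)
    (hφ'' : ∀ x ∈ Ioo a b, HasDerivAt φ' (φ'' x) x)
    (hL : ∀ x ∈ Ioo a b, ε * φ'' x + φ' x ≤ 0) (ha : 0 ≤ φ a) (hb : 0 ≤ φ b) :
    ∀ x ∈ Icc a b, 0 ≤ φ x := by
  have hanti := antitoneOn_exp_div_mul hε hφ'' hL
  intro x hx
  rcases hx.1.eq_or_lt with rfl | hax
  · exact ha
  rcases hx.2.eq_or_lt with rfl | hxb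
  · exact hb
  have hxI : x ∈ Ioo a b := ⟨hax, hxb⟩
  -- `exp (y / ε) φ' y` is antitone, so the sign of `φ' x` spreads to the left if `φ' x ≥ 0`
  -- and to the right if `φ' x < 0`; accordingly `φ x ≥ φ a` or `φ x ≥ φ b`.
  rcases le_or_gt 0 (φ' x) with hpos | hneg
  · have hmono : MonotoneOn φ (Icc a x) := by
      refine monotoneOn_of_hasDerivWithinAt_nonneg (f' := φ') (convex_Icc a x)
        (hφ.mono (Icc_subset_Icc_right hxb.le)) ?_ ?_ <;> rw [interior_Icc]
      · exact fun y hy => (hφ' y ⟨hy.1, hy.2.trans hxb⟩).hasDerivWithinAt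
      · intro y hy
        have hle := hanti ⟨hy.1, hy.2.trans hxb⟩ hxI hy.2.le
        exact nonneg_of_mul_nonneg_right
          ((mul_nonneg (exp_pos _).le hpos).trans hle) (exp_pos _)
    exact ha.trans (hmono (left_mem_Icc.2 hax.le) (right_mem_Icc.2 hax.le) hax.le)
  · have hanti' : AntitoneOn φ (Icc x b) := by
      refine antitoneOn_of_hasDerivWithinAt_nonpos (f' := φ') (convex_Icc x b)
        (hφ.mono (Icc_subset_Icc_left hax.le)) ?_ ?_ <;> rw [interior_Icc]
      · exact fun y hy => (hφ' y ⟨hax.trans hy.1, hy.2⟩).hasDerivWithinAt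
      · intro y hy
        have hle := hanti hxI ⟨hax.trans hy.1, hy.2⟩ hy.1.le
        exact nonpos_of_mul_nonpos_right
          (hle.trans (mul_neg_of_pos_of_neg (exp_pos _) hneg).le) (exp_pos _)
    exact hb.trans (hanti' (left_mem_Icc.2 hxb.le) (right_mem_Icc.2 hxb.le) hxb.le)

theorem abs_le_of_barrier {v v' v'' ψ ψ' ψ'' : ℝ → ℝ} (hε : 0 < ε)
    (hv : ContinuousOn v (Icc a b)) (hψ : ContinuousOn ψ (Icc a b))
    (hv' : ∀ x ∈ Ioo a b, HasDerivAt v (v' x) x)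
    (hv'' : ∀ x ∈ Ioo a b, HasDerivAt v' (v'' x) x)
    (hψ' : ∀ x ∈ Ioo a b, HasDerivAt ψ (ψ' x) x)
    (hψ'' : ∀ x ∈ Ioo a b, HasDerivAt ψ' (ψ'' x) x)
    (hL : ∀ x ∈ Ioo a b, |ε * v'' x + v' x| ≤ -(ε * ψ'' x + ψ' x))
    (ha : |v a| ≤ ψ a) (hb : |v b| ≤ ψ b) :
    ∀ x ∈ Icc a b, |v x| ≤ ψ x := by
  have hlower : ∀ x ∈ Icc a b, 0 ≤ ψ x + v x :=
    nonneg_of_supersolution hε (hψ.add hv) (fun x hx => (hψ' x hx).add (hv' x hx))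
      (fun x hx => (hψ'' x hx).add (hv'' x hx))
      (fun x hx => by linarith [(abs_le.1 (hL x hx)).2])
      (by linarith [(abs_le.1 ha).1]) (by linarith [(abs_le.1 hb).1])
  have hupper : ∀ x ∈ Icc a b, 0 ≤ ψ x - v x :=
    nonneg_of_supersolution hε (hψ.sub hv) (fun x hx => (hψ' x hx).sub (hv' x hx))
      (fun x hx => (hψ'' x hx).sub (hv'' x hx))
      (fun x hx => by linarith [(abs_le.1 (hL x hx)).1])
      (by linarith [(abs_le.1 ha).2]) (by linarith [(abs_le.1 hb).2])
  exact fun x hx => abs_le.2 ⟨by linarith [hlower x hx], by linarith [hupper x hx]⟩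

/-- The boundary layer `A exp (-x/ε)` at the outflow end plus a linear correction absorbing
a right-hand side of size `ε M`. -/
noncomputable def barrier (A M ε x : ℝ) : ℝ := A * exp (-x / ε) + ε * M * (1 - x)

theorem hasDerivAt_barrier (A M ε x : ℝ) :
    HasDerivAt (barrier A M ε) (-(A / ε) * exp (-x / ε) - ε * M) x :=
  ((((hasDerivAt_neg x).div_const ε).exp.const_mul A).add
    (((hasDerivAt_const x 1).sub (hasDerivAt_id' x)).const_mul (ε * M))).congr_deriv (by ring)

theorem hasDerivAt_deriv_barrier (A M ε x : ℝ) :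
    HasDerivAt (fun y => -(A / ε) * exp (-y / ε) - ε * M) (A / ε ^ 2 * exp (-x / ε)) x :=
  ((((hasDerivAt_neg x).div_const ε).exp.const_mul (-(A / ε))).sub_const (ε * M)).congr_deriv
    (by ring)

theorem continuous_barrier (A M ε : ℝ) : Continuous (barrier A M ε) := by
  unfold barrier
  fun_prop

theorem integral_exp_neg_div_le (hε : 0 < ε) (b : ℝ) :
    ∫ x in (0 : ℝ)..b, exp (-x / ε) ≤ ε := by
  have hF : ∀ x, HasDerivAt (fun y => -ε * exp (-y / ε)) (exp (-x / ε)) x := fun x =>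
    (((hasDerivAt_neg x).div_const ε).exp.const_mul (-ε)).congr_deriv (by field_simp)
  rw [integral_eq_sub_of_hasDerivAt (fun x _ => hF x)
    ((by fun_prop : Continuous fun x => exp (-x / ε)).intervalIntegrable _ _)]
  simp only [neg_zero, zero_div, exp_zero]
  nlinarith [exp_pos (-b / ε)]

theorem integral_barrier_sq_le (A M : ℝ) (hε : 0 < ε) (hε1 : ε ≤ 1) :
    ∫ x in (0 : ℝ)..1, barrier A M ε x ^ 2 ≤ 2 * (A ^ 2 + M ^ 2) * ε := by
  have hpt : ∀ x ∈ Icc (0 : ℝ) 1,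
      barrier A M ε x ^ 2 ≤ 2 * A ^ 2 * exp (-x / ε) + 2 * (ε * M) ^ 2 := by
    intro x hx
    have he : exp (-x / ε) ≤ 1 :=
      exp_le_one_iff.2 (div_nonpos_of_nonpos_of_nonneg (by linarith [hx.1]) hε.le)
    have h1x : (1 - x) ^ 2 ≤ 1 := by nlinarith [hx.1, hx.2]
    calc barrier A M ε x ^ 2
        ≤ 2 * (A ^ 2 * exp (-x / ε) ^ 2 + (ε * M) ^ 2 * (1 - x) ^ 2) := by
          unfold barrier; nlinarith [add_sq_le (a := A * exp (-x / ε)) (b := ε * M * (1 - x))]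
      _ ≤ _ := by
          nlinarith [mul_le_mul_of_nonneg_left h1x (sq_nonneg (ε * M)),
            mul_le_mul_of_nonneg_left (pow_le_of_le_one (exp_pos _).le he two_ne_zero)
              (sq_nonneg A)]
  have hexp : IntervalIntegrable (fun x => exp (-x / ε)) MeasureTheory.volume 0 1 :=
    (by fun_prop : Continuous fun x => exp (-x / ε)).intervalIntegrable _ _
  calc ∫ x in (0 : ℝ)..1, barrier A M ε x ^ 2
      ≤ ∫ x in (0 : ℝ)..1, (2 * A ^ 2 * exp (-x / ε) + 2 * (ε * M) ^ 2) :=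
        integral_mono_on zero_le_one (((continuous_barrier A M ε).pow 2).intervalIntegrable _ _)
          ((hexp.const_mul _).add intervalIntegrable_const) hpt
    _ = 2 * A ^ 2 * (∫ x in (0 : ℝ)..1, exp (-x / ε)) + 2 * (ε * M) ^ 2 := by
        rw [integral_add (hexp.const_mul _) intervalIntegrable_const, integral_const_mul]
        simp
    _ ≤ 2 * A ^ 2 * ε + 2 * (ε * M) ^ 2 := by
        gcongr
        exact integral_exp_neg_div_le hε 1
    _ ≤ 2 * (A ^ 2 + M ^ 2) * ε := by
        nlinarith [mul_le_mul_of_nonneg_right hε1 (mul_nonneg hε.le (sq_nonneg M))]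

theorem abs_sub_integral_le_barrier {f u : ℝ → ℝ} {M : ℝ} (hε : 0 < ε)
    (hf : ContDiffOn ℝ 1 f (Icc 0 1)) (hM : ∀ x ∈ Ioo (0 : ℝ) 1, |deriv f x| ≤ M)
    (hu : ContDiffOn ℝ 2 u (Icc 0 1))
    (hode : ∀ x ∈ Ioo (0 : ℝ) 1, -ε * deriv (deriv u) x - deriv u x = f x)
    (hu0 : u 0 = 0) (hu1 : u 1 = 0) :
    ∀ x ∈ Icc (0 : ℝ) 1,
      |u x - ∫ s in x..1, f s| ≤ barrier |∫ s in (0 : ℝ)..1, f s| M ε x := by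
  have hfc := hf.continuousOn
  have hM0 : 0 ≤ M := (abs_nonneg _).trans (hM (1 / 2) ⟨by norm_num, by norm_num⟩)
  refine abs_le_of_barrier (v' := fun x => deriv u x + f x)
    (v'' := fun x => deriv (deriv u) x + deriv f x) hε
    (hu.continuousOn.sub (hfc.continuousOn_integral_left zero_le_one))
    (continuous_barrier _ _ _).continuousOn (fun x hx => ?_) (fun x hx => ?_)
    (fun x _ => hasDerivAt_barrier _ _ _ x) (fun x _ => hasDerivAt_deriv_barrier _ _ _ x)
    (fun x hx => ?_) ?_ ?_
  · exact (((hu.differentiableOn (by norm_num)).differentiableAt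
      (Icc_mem_nhds hx.1 hx.2)).hasDerivAt.sub (hfc.hasDerivAt_integral_left hx)).congr_deriv
      (sub_neg_eq_add _ _)
  · exact (hu.hasDerivAt_deriv_of_mem_Ioo hx).add
      ((hf.differentiableOn one_ne_zero).differentiableAt (Icc_mem_nhds hx.1 hx.2)).hasDerivAt
  · have hv : ε * (deriv (deriv u) x + deriv f x) + (deriv u x + f x) = ε * deriv f x := by
      linarith [hode x hx]
    have hψ : ∀ A y, -(ε * (A / ε ^ 2 * exp (-y / ε)) + (-(A / ε) * exp (-y / ε) - ε * M))
        = ε * M := by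
      intro A y
      field_simp
      ring
    rw [hv, hψ, abs_mul, abs_of_pos hε]
    exact mul_le_mul_of_nonneg_left (hM x hx) hε.le
  · simp only [barrier, hu0, neg_zero, zero_div, exp_zero, zero_sub, abs_neg, mul_one, sub_zero]
    exact le_add_of_nonneg_right (mul_nonneg hε.le hM0)
  · simp only [barrier, hu1, integral_same, sub_self, abs_zero, mul_zero, add_zero]
    positivity

end ConvectionDiffusion

/-- Let `f : [0,1] → ℝ` be continuously differentiable and
`u⁰(x) = ∫_x^1 f(s) ds`.  Then there is a constant `κ > 0`, depending only on `f` and not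
on `ε`, such that for every `ε ∈ (0,1]` and every `u : [0,1] → ℝ` twice continuously
differentiable on `[0,1]` solving `−ε u'' − u' = f` on `(0,1)` with `u(0) = u(1) = 0`,
one has `∫_0^1 (u − u⁰)² dx ≤ κ² ε`; i.e. the diffusive solution converges to the limit
solution in `L²(0,1)` at rate `ε^{1/2}`. -/
theorem diffusive_L2_convergence_rate
    (f : ℝ → ℝ) (hf : ContDiffOn ℝ 1 f (Icc 0 1))
    (u0 : ℝ → ℝ) (hu0 : ∀ x, u0 x = ∫ s in x..(1 : ℝ), f s) :
    ∃ κ : ℝ, 0 < κ ∧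
      ∀ ε ∈ Ioc (0 : ℝ) 1, ∀ u : ℝ → ℝ,
        ContDiffOn ℝ 2 u (Icc 0 1) →
        (∀ x ∈ Ioo (0 : ℝ) 1, -ε * deriv (deriv u) x - deriv u x = f x) →
        u 0 = 0 → u 1 = 0 →
        (∫ x in (0 : ℝ)..1, (u x - u0 x) ^ 2) ≤ κ ^ 2 * ε := by
  obtain ⟨M, hM, hfM⟩ := hf.exists_pos_bound_abs_deriv zero_lt_one
  set a := ∫ s in (0 : ℝ)..1, f s
  refine ⟨√(2 * (a ^ 2 + M ^ 2)), by positivity,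
    fun ε ⟨hε, hε1⟩ u hu hode hu0' hu1' => ?_⟩
  have hu0c : ContinuousOn u0 (Icc 0 1) := by
    simpa only [← funext hu0] using hf.continuousOn.continuousOn_integral_left zero_le_one
  have hbound := ConvectionDiffusion.abs_sub_integral_le_barrier hε hf hfM hu hode hu0' hu1'
  calc ∫ x in (0 : ℝ)..1, (u x - u0 x) ^ 2
      ≤ ∫ x in (0 : ℝ)..1, ConvectionDiffusion.barrier |a| M ε x ^ 2 := by
        refine integral_mono_on zero_le_one
          (((hu.continuousOn.sub hu0c).pow 2).intervalIntegrable_of_Icc zero_le_one)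
          (((ConvectionDiffusion.continuous_barrier _ _ _).pow 2).intervalIntegrable _ _)
          fun x hx => ?_
        rw [hu0]
        exact sq_le_sq' (abs_le.1 (hbound x hx)).1 (abs_le.1 (hbound x hx)).2
    _ ≤ 2 * (|a| ^ 2 + M ^ 2) * ε := ConvectionDiffusion.integral_barrier_sq_le _ _ hε hε1
    _ = _ := by rw [sq_abs, sq_sqrt (by positivity)]
end
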